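/- arXiv:2201.06157 — 2 statements merged into one kernel-verified Lean document; each statement's English description precedes it below -/
import Mathlib

section
/- Suppose each strategy set S_i is finite and nonempty and the game admits an exact potential F : S → ℝ. Then every strict improvement path is finite: there is no infinite sequence of joint strategies u^0, u^1, u^2, … in S such that for every k, u^{k+1} differs from u^k in exactly one player's coordinate i_k and V_{i_k}(u^{k+1}) < V_{i_k}(u^k). Consequently, the best response dynamics, which repeatedly replaces one player's strategy by a strictly cost-decreasing strategy, terminates after finitely many steps at a pure-strategy Nash equilibrium. -/
/-- In a finite game admitting an exact potential, every strict improvement path is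
finite (no infinite sequence of strictly cost-decreasing unilateral deviations exists),
and any profile from which no strictly cost-decreasing unilateral deviation exists is a
pure-strategy Nash equilibrium (so the best response dynamics terminates after finitely
many steps at a pure-strategy Nash equilibrium). -/
theorem stmt5 {N : ℕ} (U : Fin N → Type*) [∀ i, Fintype (U i)] [∀ i, Nonempty (U i)]
    (V : ∀ i : Fin N, (∀ j, U j) → ℝ)
    (F : (∀ j, U j) → ℝ)
    (hF : ∀ (i : Fin N) (u : ∀ j, U j) (ui' : U i),
      V i u - V i (Function.update u i ui') = F u - F (Function.update u i ui')) :
    (¬ ∃ u : ℕ → ∀ j, U j, ∀ k : ℕ, ∃ i : Fin N,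
        u (k + 1) = Function.update (u k) i (u (k + 1) i) ∧
        u (k + 1) i ≠ u k i ∧
        V i (u (k + 1)) < V i (u k)) ∧
    (∀ ustar : ∀ j, U j,
      (¬ ∃ (i : Fin N) (ui : U i), V i (Function.update ustar i ui) < V i ustar) →
      ∀ (i : Fin N) (ui : U i), V i ustar ≤ V i (Function.update ustar i ui)) := by
  constructor
  · rintro ⟨u, hu⟩
    have hdec : ∀ k : ℕ, F (u (k + 1)) < F (u k) := by
      intro k
      obtain ⟨i, heq, -, hlt⟩ := hu k
      have h := hF i (u k) (u (k + 1) i)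
      rw [← heq] at h
      linarith
    have hanti : StrictAnti (fun k => F (u k)) := strictAnti_nat_of_succ_lt hdec
    have hinj : Function.Injective u := fun a b hab => hanti.injective (by simp [hab])
    obtain ⟨x, y, hne, hxy⟩ := Finite.exists_ne_map_eq_of_infinite u
    exact hne (hinj hxy)
  · intro ustar h i ui
    push_neg at h
    exact h i ui
end

section
/- Suppose the game is a continuous exact potential game with potential F (each S_i ⊆ ℝ^{m_i} nonempty and connected, V_i and F everywhere differentiable on an open superset of S, and ∂V_i(u_i, u_{-i})/∂u_i = ∂F(u_i, u_{-i})/∂u_i on S for all i), the joint strategy space S is compact and convex, and F is strictly convex on S. Then the game has exactly one pure-strategy Nash equilibrium. -/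
/-!
Along player `i`'s own coordinate, `V i` and the potential `F` have the same derivative, so by
the mean value theorem on the convex slice `S i` their difference does not depend on `u i`.
Hence the Nash equilibria are exactly the joint strategies at which `F` is minimal along every
coordinate slice. A minimiser of `F` on the compact set `univ.pi S` exists and is such a point.
Conversely, at such a point every partial derivative of `F` is nonnegative in the feasible
directions; summing them, the derivative of `F` is nonnegative towards every point of
`univ.pi S`, so convexity makes it a global minimiser, and strict convexity leaves only one.
-/

open Set Function

theorem Convex.of_univ_pi {𝕜 ι : Type*} [Semiring 𝕜] [PartialOrder 𝕜] {E : ι → Type*}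
    [∀ i, AddCommMonoid (E i)] [∀ i, SMul 𝕜 (E i)] {S : ∀ i, Set (E i)}
    (h : Convex 𝕜 (univ.pi S)) (hne : (univ.pi S).Nonempty) (i : ι) : Convex 𝕜 (S i) := by
  classical
  intro x hx y hy a b ha hb hab
  obtain ⟨u, hu⟩ := hne
  have hmem := h ((update_mem_pi_iff_of_mem hu).2 fun _ => hx)
    ((update_mem_pi_iff_of_mem hu).2 fun _ => hy) ha hb hab i (mem_univ i)
  simpa using hmem

theorem Convex.sub_eq_sub_of_fderiv_eq {E G : Type*} [NormedAddCommGroup E] [NormedSpace ℝ E]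
    [NormedAddCommGroup G] [NormedSpace ℝ G] {s : Set E} {f g : E → G} {x y : E}
    (hs : Convex ℝ s) (hf : ∀ z ∈ s, DifferentiableAt ℝ f z)
    (hg : ∀ z ∈ s, DifferentiableAt ℝ g z) (hfg : ∀ z ∈ s, fderiv ℝ f z = fderiv ℝ g z)
    (hx : x ∈ s) (hy : y ∈ s) : f y - g y = f x - g x := by
  have hderiv : ∀ z ∈ s, HasFDerivWithinAt (f - g) (0 : E →L[ℝ] G) s z :=
    fun z hz => by
      simpa [hfg z hz] using ((hf z hz).hasFDerivAt.sub (hg z hz).hasFDerivAt).hasFDerivWithinAt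
  have hle := hs.norm_image_sub_le_of_norm_hasFDerivWithin_le hderiv
    (fun _ _ => norm_zero.le) hx hy
  rwa [zero_mul, norm_le_zero_iff, sub_eq_zero, Pi.sub_apply, Pi.sub_apply] at hle

theorem ConvexOn.fderiv_apply_sub_le {E : Type*} [NormedAddCommGroup E] [NormedSpace ℝ E]
    {s : Set E} {f : E → ℝ} {x y : E} (hf : ConvexOn ℝ s f) (hx : x ∈ s) (hy : y ∈ s)
    (hdf : DifferentiableAt ℝ f x) : fderiv ℝ f x (y - x) ≤ f y - f x := by
  have hline : ConvexOn ℝ (Icc 0 1) (f ∘ AffineMap.lineMap (k := ℝ) x y) :=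
    (hf.comp_affineMap _).subset (fun _ ht => hf.1.lineMap_mem hx hy ht) (convex_Icc 0 1)
  have hderiv : HasDerivAt (f ∘ AffineMap.lineMap (k := ℝ) x y) (fderiv ℝ f x (y - x)) 0 := by
    have hdf' : HasFDerivAt f (fderiv ℝ f x) (AffineMap.lineMap (k := ℝ) x y 0) := by
      simpa using hdf.hasFDerivAt
    exact hdf'.comp_hasDerivAt 0 AffineMap.hasDerivAt_lineMap
  simpa [slope_def_field] using hline.le_slope_of_hasDerivWithinAt (left_mem_Icc.2 zero_le_one)
    (right_mem_Icc.2 zero_le_one) zero_lt_one hderiv.hasDerivWithinAt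

section Pi

variable {ι : Type*} [Fintype ι] [DecidableEq ι] {E : ι → Type*}
  [∀ i, NormedAddCommGroup (E i)] [∀ i, NormedSpace ℝ (E i)]

theorem HasFDerivAt.comp_update {G : Type*} [NormedAddCommGroup G] [NormedSpace ℝ G]
    {f : (∀ i, E i) → G} {f' : (∀ i, E i) →L[ℝ] G} {u : ∀ i, E i} (hf : HasFDerivAt f f' u)
    (i : ι) :
    HasFDerivAt (fun y => f (update u i y)) (f'.comp (ContinuousLinearMap.single ℝ E i)) (u i) := by
  have hupd : ContinuousLinearMap.pi (Pi.single i (.id ℝ (E i))) =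
      ContinuousLinearMap.single ℝ E i := by
    ext y j
    rcases eq_or_ne j i with rfl | hji <;> simp [*]
  have hf' : HasFDerivAt f f' (update u i (u i)) := by rwa [update_eq_self]
  rw [← hupd]
  exact hf'.comp (u i) (hasFDerivAt_update u (u i))

theorem Convex.sub_comp_update_eq_of_fderiv_comp_update_eq {G : Type*} [NormedAddCommGroup G]
    [NormedSpace ℝ G] {S : ∀ i, Set (E i)} {f g : (∀ i, E i) → G}
    (hS : Convex ℝ (univ.pi S)) (hf : ∀ v ∈ univ.pi S, DifferentiableAt ℝ f v)
    (hg : ∀ v ∈ univ.pi S, DifferentiableAt ℝ g v) (i : ι)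
    (hfg : ∀ v ∈ univ.pi S, fderiv ℝ (fun y => f (update v i y)) (v i) =
      fderiv ℝ (fun y => g (update v i y)) (v i))
    {u : ∀ i, E i} (hu : u ∈ univ.pi S) {x : E i} (hx : x ∈ S i) :
    f (update u i x) - g (update u i x) = f u - g u := by
  have hupd : ∀ z ∈ S i, update u i z ∈ univ.pi S :=
    fun z hz => (update_mem_pi_iff_of_mem hu).2 fun _ => hz
  have hslice : ∀ h : (∀ i, E i) → G, (∀ v ∈ univ.pi S, DifferentiableAt ℝ h v) →
      ∀ z ∈ S i, DifferentiableAt ℝ (fun y => h (update u i y)) z := fun h hh z hz =>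
    (hh _ (hupd z hz)).comp z (hasFDerivAt_update u z).differentiableAt
  have hconst := (hS.of_univ_pi ⟨u, hu⟩ i).sub_eq_sub_of_fderiv_eq (hslice f hf) (hslice g hg)
    (fun z hz => by simpa [update_idem] using hfg _ (hupd z hz)) (hu i (mem_univ i)) hx
  simpa using hconst

theorem ConvexOn.isMinOn_univ_pi_of_isMinOn_update {S : ∀ i, Set (E i)} {f : (∀ i, E i) → ℝ}
    {u : ∀ i, E i} (hf : ConvexOn ℝ (univ.pi S) f) (hu : u ∈ univ.pi S)
    (hdf : DifferentiableAt ℝ f u) (hmin : ∀ i, IsMinOn (fun y => f (update u i y)) (S i) (u i)) :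
    IsMinOn f (univ.pi S) u := by
  intro v hv
  have hdir : 0 ≤ fderiv ℝ f u (v - u) := by
    rw [← ContinuousLinearMap.sum_comp_single ℝ E (fderiv ℝ f u) (v - u)]
    refine Finset.sum_nonneg fun i _ => ?_
    have hseg : segment ℝ (u i) (v i) ⊆ S i :=
      (hf.1.of_univ_pi ⟨u, hu⟩ i).segment_subset (hu i (mem_univ i)) (hv i (mem_univ i))
    exact (hmin i).localize.hasFDerivWithinAt_nonneg
      (hdf.hasFDerivAt.comp_update i).hasFDerivWithinAt
      (sub_mem_posTangentConeAt_of_segment_subset hseg)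
  simpa using hdir.trans (hf.fderiv_apply_sub_le hu hv hdf)

end Pi

theorem stmt11_general {N : ℕ} (m : Fin N → ℕ)
    (S : ∀ i, Set (EuclideanSpace ℝ (Fin (m i))))
    (hne : ∀ i, (S i).Nonempty)
    (hcpt : IsCompact (Set.univ.pi S))
    (hconv : Convex ℝ (Set.univ.pi S))
    (V : ∀ i : Fin N, (∀ j, EuclideanSpace ℝ (Fin (m j))) → ℝ)
    (F : (∀ j, EuclideanSpace ℝ (Fin (m j))) → ℝ)
    (hstrict : StrictConvexOn ℝ (Set.univ.pi S) F)
    (O : Set (∀ j, EuclideanSpace ℝ (Fin (m j))))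
    (hO : IsOpen O) (hSO : Set.univ.pi S ⊆ O)
    (hVd : ∀ i, DifferentiableOn ℝ (V i) O)
    (hFd : DifferentiableOn ℝ F O)
    (hgrad : ∀ (i : Fin N) (u : ∀ j, EuclideanSpace ℝ (Fin (m j))), u ∈ Set.univ.pi S →
      fderiv ℝ (fun x => V i (Function.update u i x)) (u i) =
        fderiv ℝ (fun x => F (Function.update u i x)) (u i)) :
    ∃! ustar : ∀ j, EuclideanSpace ℝ (Fin (m j)),
      ustar ∈ Set.univ.pi S ∧
        ∀ (i : Fin N), ∀ ui ∈ S i,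
          V i ustar ≤ V i (Function.update ustar i ui) := by
  have hdiff : ∀ G : (∀ j, EuclideanSpace ℝ (Fin (m j))) → ℝ, DifferentiableOn ℝ G O →
      ∀ u ∈ univ.pi S, DifferentiableAt ℝ G u :=
    fun G hG u hu => hG.differentiableAt (hO.mem_nhds (hSO hu))
  have hpotential : ∀ u ∈ univ.pi S, ∀ i, ∀ x ∈ S i,
      V i (update u i x) - F (update u i x) = V i u - F u := fun u hu i _ hx =>
    hconv.sub_comp_update_eq_of_fderiv_comp_update_eq (hdiff _ (hVd i)) (hdiff F hFd) i
      (hgrad i) hu hx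
  obtain ⟨u₀, hu₀, hmin⟩ :=
    hcpt.exists_isMinOn (univ_pi_nonempty_iff.2 hne) (hFd.continuousOn.mono hSO)
  refine ⟨u₀, ⟨hu₀, fun i x hx => ?_⟩, fun u ⟨hu, hnash⟩ => ?_⟩
  · linarith [hpotential u₀ hu₀ i x hx,
      isMinOn_iff.1 hmin _ ((update_mem_pi_iff_of_mem hu₀).2 fun _ => hx)]
  · refine hstrict.eq_of_isMinOn ?_ hmin hu hu₀
    refine hstrict.convexOn.isMinOn_univ_pi_of_isMinOn_update hu (hdiff F hFd u hu)
      fun i => isMinOn_iff.2 fun x hx => ?_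
    linarith [hpotential u hu i x hx, hnash i x hx, congrArg F (update_eq_self i u)]

/-- A continuous exact potential game with potential `F`, compact and convex joint
strategy space, and `F` strictly convex on `S`, has exactly one pure-strategy Nash
equilibrium. -/
theorem stmt11 {N : ℕ} (m : Fin N → ℕ)
    (S : ∀ i, Set (EuclideanSpace ℝ (Fin (m i))))
    (hne : ∀ i, (S i).Nonempty)
    (hconn : ∀ i, IsConnected (S i))
    (hcpt : IsCompact (Set.univ.pi S))
    (hconv : Convex ℝ (Set.univ.pi S))
    (V : ∀ i : Fin N, (∀ j, EuclideanSpace ℝ (Fin (m j))) → ℝ)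
    (F : (∀ j, EuclideanSpace ℝ (Fin (m j))) → ℝ)
    (hstrict : StrictConvexOn ℝ (Set.univ.pi S) F)
    (O : Set (∀ j, EuclideanSpace ℝ (Fin (m j))))
    (hO : IsOpen O) (hSO : Set.univ.pi S ⊆ O)
    (hVd : ∀ i, DifferentiableOn ℝ (V i) O)
    (hFd : DifferentiableOn ℝ F O)
    (hgrad : ∀ (i : Fin N) (u : ∀ j, EuclideanSpace ℝ (Fin (m j))), u ∈ Set.univ.pi S →
      fderiv ℝ (fun x => V i (Function.update u i x)) (u i) =
        fderiv ℝ (fun x => F (Function.update u i x)) (u i)) :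
    ∃! ustar : ∀ j, EuclideanSpace ℝ (Fin (m j)),
      ustar ∈ Set.univ.pi S ∧
        ∀ (i : Fin N), ∀ ui ∈ S i,
          V i ustar ≤ V i (Function.update ustar i ui) :=
  stmt11_general m S hne hcpt hconv V F hstrict O hO hSO hVd hFd hgrad
end
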